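/- Let $U$ be a complete filtered cocommutative bialgebra over a field of characteristic zero, $\beta = \sum_{i\ge1} b_i$ a primitive element with $b_i$ of weight $i$, and suppose $U$ carries a dendriform splitting of its product on the positively-weighted part given by $u \prec v = \frac{|u|}{|u|+|v|} uv$ on weight-homogeneous elements (Foissy's construction). Then the element $1 + \sum_{k\ge1}\beta^{\prec k}$ is group-like: $\Delta\left(1+\sum_{k\ge1}\beta^{\prec k}\right) = \left(1+\sum_{k\ge1}\beta^{\prec k}\right)\otimes\left(1+\sum_{k\ge1}\beta^{\prec k}\right)$. Equivalently, writing $\beta^{\prec m} = \sum_i b_i^{(m)}$ with $b_i^{(m)}$ of weight $i$ and $b_i^{(0)} = \delta_{i,0}$, one has $\Delta(b_i^{(k)}) = \sum_{p=0}^{k}\sum_{r=0}^{i} b_r^{(p)} \otimes b_{i-r}^{(k-p)}$. -/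

import Mathlib

/-!
Let `N` multiply the weight-`i` component by `i`. The recursion defining `β^{≺(k+1)}` says
exactly `N(β^{≺(k+1)}) = N(β) · β^{≺k}`. Induct on `k`: applying `Δ` to this, with `Nβ`
primitive and `Δ` multiplicative, gives the same triple sum as `N ⊗ 1 + 1 ⊗ N` applied to the
claimed expansion of `Δ(β^{≺(k+1)})`, which multiplies its weight-`s` part by `s`. Dividing by
`s` in characteristic zero settles weight `s ≠ 0`; weight `0` is immediate.
-/

open TensorProduct

/-- `Bcomp b k i` is the weight-`i` component `b_i^{(k)}` of the `k`-th Foissy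
left-power `β^{≺k}` of the primitive series `β = ∑_{i≥1} b i`, defined by
`b_i^{(0)} = δ_{i,0}` and `b_s^{(m+1)} = ∑_i (i/s) b_i b_{s-i}^{(m)}`. -/
noncomputable def Bcomp {U : Type*} [Ring U] [Module ℚ U] (b : ℕ → U) :
    ℕ → ℕ → U
  | 0, i => if i = 0 then 1 else 0
  | m + 1, s => ∑ i ∈ Finset.range (s + 1),
      (((i : ℚ) / (s : ℚ)) • (b i * Bcomp b m (s - i)))

open Finset

namespace Finset.Nat

theorem sum_antidiagonal_antidiagonal_fst {M : Type*} [AddCommMonoid M] (n : ℕ)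
    (f : ℕ → ℕ → ℕ → M) :
    ∑ p ∈ antidiagonal n, ∑ q ∈ antidiagonal p.1, f q.1 q.2 p.2
      = ∑ p ∈ antidiagonal n, ∑ q ∈ antidiagonal p.2, f p.1 q.1 q.2 := by
  rw [sum_sigma', sum_sigma']
  refine sum_nbij' (fun x => ⟨(x.2.1, x.2.2 + x.1.2), (x.2.2, x.1.2)⟩)
    (fun x => ⟨(x.1.1 + x.2.1, x.2.2), (x.1.1, x.2.1)⟩) ?_ ?_ ?_ ?_ ?_ <;>
    rintro ⟨⟨a, b⟩, ⟨c, d⟩⟩ h <;>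
    simp only [mem_sigma, HasAntidiagonal.mem_antidiagonal, Sigma.mk.injEq, Prod.mk.injEq,
      heq_eq_eq, true_and, and_true] at h ⊢ <;> omega

theorem sum_antidiagonal_antidiagonal_snd {M : Type*} [AddCommMonoid M] (n : ℕ)
    (f : ℕ → ℕ → ℕ → M) :
    ∑ p ∈ antidiagonal n, ∑ q ∈ antidiagonal p.2, f p.1 q.1 q.2
      = ∑ p ∈ antidiagonal n, ∑ q ∈ antidiagonal p.2, f q.1 p.1 q.2 := by
  rw [← sum_antidiagonal_antidiagonal_fst,
    ← sum_antidiagonal_antidiagonal_fst n fun a b c => f b a c]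
  exact sum_congr rfl fun p _ => (sum_antidiagonal_swap (f := fun q => f q.1 q.2 p.2)).symm

end Finset.Nat

theorem TensorProduct.natCast_smul_sum_antidiagonal_tmul {R M N : Type*} [CommSemiring R]
    [AddCommMonoid M] [AddCommMonoid N] [Module R M] [Module R N]
    (f : ℕ → M) (g : ℕ → N) (n : ℕ) :
    (n : R) • ∑ p ∈ antidiagonal n, f p.1 ⊗ₜ[R] g p.2
      = ∑ p ∈ antidiagonal n, ((p.1 : R) • f p.1) ⊗ₜ[R] g p.2
        + ∑ p ∈ antidiagonal n, f p.1 ⊗ₜ[R] ((p.2 : R) • g p.2) := by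
  rw [smul_sum, ← sum_add_distrib]
  refine sum_congr rfl fun p hp => ?_
  rw [← HasAntidiagonal.mem_antidiagonal.mp hp, Nat.cast_add, add_smul, smul_tmul', tmul_smul]

section Bcomp

variable {U : Type*} [Ring U] [Module ℚ U] (b : ℕ → U)

theorem Bcomp_zero (i : ℕ) : Bcomp b 0 i = if i = 0 then 1 else 0 := rfl

theorem Bcomp_succ_zero (m : ℕ) : Bcomp b (m + 1) 0 = 0 := by
  simp [Bcomp]

theorem natCast_smul_Bcomp_zero (i : ℕ) : (i : ℚ) • Bcomp b 0 i = 0 := by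
  rcases eq_or_ne i 0 with rfl | hi
  · simp
  · simp [Bcomp_zero, hi]

theorem natCast_smul_Bcomp_succ (m s : ℕ) :
    (s : ℚ) • Bcomp b (m + 1) s
      = ∑ p ∈ antidiagonal s, (p.1 : ℚ) • (b p.1 * Bcomp b m p.2) := by
  rw [Nat.sum_antidiagonal_eq_sum_range_succ (fun i j => (i : ℚ) • (b i * Bcomp b m j)), Bcomp,
    smul_sum]
  refine sum_congr rfl fun i hi => ?_
  rw [smul_smul]
  rcases eq_or_ne s 0 with rfl | hs
  · simp_all
  · rw [mul_div_cancel₀ _ (Nat.cast_ne_zero.mpr hs)]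

theorem sum_natCast_smul_Bcomp_succ_tmul {V : Type*} [AddCommGroup V] [Module ℚ V]
    (m s : ℕ) (g : ℕ → V) :
    ∑ r ∈ antidiagonal s, ((r.1 : ℚ) • Bcomp b (m + 1) r.1) ⊗ₜ[ℚ] g r.2
      = ∑ x ∈ antidiagonal s, ∑ r ∈ antidiagonal x.2,
          (x.1 : ℚ) • ((b x.1 * Bcomp b m r.1) ⊗ₜ[ℚ] g r.2) := by
  simp_rw [natCast_smul_Bcomp_succ, sum_tmul, ← smul_tmul']
  exact Nat.sum_antidiagonal_antidiagonal_fst s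
    fun i j k => (i : ℚ) • ((b i * Bcomp b m j) ⊗ₜ[ℚ] g k)

theorem sum_tmul_natCast_smul_Bcomp_succ {V : Type*} [AddCommGroup V] [Module ℚ V]
    (m s : ℕ) (f : ℕ → V) :
    ∑ r ∈ antidiagonal s, f r.1 ⊗ₜ[ℚ] ((r.2 : ℚ) • Bcomp b (m + 1) r.2)
      = ∑ x ∈ antidiagonal s, ∑ r ∈ antidiagonal x.2,
          (x.1 : ℚ) • (f r.1 ⊗ₜ[ℚ] (b x.1 * Bcomp b m r.2)) := by
  simp_rw [natCast_smul_Bcomp_succ, tmul_sum, tmul_smul]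
  exact Nat.sum_antidiagonal_antidiagonal_snd s
    fun i j k => (j : ℚ) • (f i ⊗ₜ[ℚ] (b j * Bcomp b m k))

end Bcomp

section Coproduct

open Coalgebra

variable {U : Type*} [Ring U] [Bialgebra ℚ U] (b : ℕ → U)

theorem comul_Bcomp_zero (s : ℕ) :
    comul (R := ℚ) (Bcomp b 0 s)
      = ∑ p ∈ antidiagonal 0, ∑ q ∈ antidiagonal s, Bcomp b p.1 q.1 ⊗ₜ[ℚ] Bcomp b p.2 q.2 := by
  rcases eq_or_ne s 0 with rfl | hs
  · simp [Bcomp_zero, Algebra.TensorProduct.one_def]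
  · simp only [Nat.antidiagonal_zero, sum_singleton, Bcomp_zero, hs, if_false, map_zero]
    refine (sum_eq_zero fun q hq => ?_).symm
    have : q.1 ≠ 0 ∨ q.2 ≠ 0 := by grind [HasAntidiagonal.mem_antidiagonal]
    rcases this with h | h <;> simp [h]

theorem comul_Bcomp_succ_zero (k : ℕ) :
    comul (R := ℚ) (Bcomp b (k + 1) 0)
      = ∑ p ∈ antidiagonal (k + 1), ∑ q ∈ antidiagonal 0,
          Bcomp b p.1 q.1 ⊗ₜ[ℚ] Bcomp b p.2 q.2 := by
  simp [Bcomp_succ_zero, Nat.sum_antidiagonal_succ]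

theorem comul_Bcomp
    (hprim : ∀ i, 1 ≤ i → comul (R := ℚ) (b i) = b i ⊗ₜ[ℚ] 1 + 1 ⊗ₜ[ℚ] b i) (k s : ℕ) :
    comul (R := ℚ) (Bcomp b k s)
      = ∑ p ∈ antidiagonal k, ∑ q ∈ antidiagonal s, Bcomp b p.1 q.1 ⊗ₜ[ℚ] Bcomp b p.2 q.2 := by
  induction k generalizing s with
  | zero => exact comul_Bcomp_zero b s
  | succ k ih =>
    rcases eq_or_ne s 0 with rfl | hs
    · exact comul_Bcomp_succ_zero b k
    have hprim' (i : ℕ) :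
        (i : ℚ) • comul (R := ℚ) (b i) = (i : ℚ) • (b i ⊗ₜ[ℚ] 1 + 1 ⊗ₜ[ℚ] b i) := by
      rcases Nat.eq_zero_or_pos i with rfl | hi
      · simp
      · rw [hprim i hi]
    refine smul_right_injective (U ⊗[ℚ] U) (Nat.cast_ne_zero.mpr hs : (s : ℚ) ≠ 0) ?_
    calc (s : ℚ) • comul (R := ℚ) (Bcomp b (k + 1) s)
        = ∑ x ∈ antidiagonal s, ((x.1 : ℚ) • (b x.1 ⊗ₜ[ℚ] 1 + 1 ⊗ₜ[ℚ] b x.1)) *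
            ∑ p ∈ antidiagonal k, ∑ q ∈ antidiagonal x.2,
              Bcomp b p.1 q.1 ⊗ₜ[ℚ] Bcomp b p.2 q.2 := by
          rw [← map_smul, natCast_smul_Bcomp_succ, map_sum]
          refine sum_congr rfl fun x _ => ?_
          rw [← smul_mul_assoc, Bialgebra.comul_mul, map_smul, hprim', ih]
      _ = ∑ p ∈ antidiagonal k, ∑ x ∈ antidiagonal s, ∑ q ∈ antidiagonal x.2,
            ((x.1 : ℚ) • ((b x.1 * Bcomp b p.1 q.1) ⊗ₜ[ℚ] Bcomp b p.2 q.2)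
              + (x.1 : ℚ) • (Bcomp b p.1 q.1 ⊗ₜ[ℚ] (b x.1 * Bcomp b p.2 q.2))) := by
          simp only [mul_sum, smul_mul_assoc, add_mul, Algebra.TensorProduct.tmul_mul_tmul,
            one_mul, smul_add]
          exact sum_comm
      _ = ∑ p ∈ antidiagonal (k + 1), ∑ q ∈ antidiagonal s,
            (((q.1 : ℚ) • Bcomp b p.1 q.1) ⊗ₜ[ℚ] Bcomp b p.2 q.2
              + Bcomp b p.1 q.1 ⊗ₜ[ℚ] ((q.2 : ℚ) • Bcomp b p.2 q.2)) := by
          simp only [sum_add_distrib]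
          rw [Nat.sum_antidiagonal_succ, Nat.sum_antidiagonal_succ']
          simp only [natCast_smul_Bcomp_zero, zero_tmul, tmul_zero, sum_const_zero, zero_add,
            sum_natCast_smul_Bcomp_succ_tmul, sum_tmul_natCast_smul_Bcomp_succ]
      _ = (s : ℚ) • ∑ p ∈ antidiagonal (k + 1), ∑ q ∈ antidiagonal s,
            Bcomp b p.1 q.1 ⊗ₜ[ℚ] Bcomp b p.2 q.2 := by
          rw [smul_sum]
          simp only [natCast_smul_sum_antidiagonal_tmul, sum_add_distrib]

end Coproduct

theorem foissy_power_grouplike_general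
    {U : Type*} [Ring U] [Bialgebra ℚ U]
    (b : ℕ → U)
    (hprim : ∀ i : ℕ, 1 ≤ i →
      Coalgebra.comul (R := ℚ) (b i) = b i ⊗ₜ[ℚ] 1 + 1 ⊗ₜ[ℚ] b i) :
    ∀ k i : ℕ,
      Coalgebra.comul (R := ℚ) (Bcomp b k i)
        = ∑ p ∈ Finset.range (k + 1), ∑ r ∈ Finset.range (i + 1),
            Bcomp b p r ⊗ₜ[ℚ] Bcomp b (k - p) (i - r) := by
  intro k i
  simp only [comul_Bcomp b hprim, Nat.sum_antidiagonal_eq_sum_range_succ_mk]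

/-- in a complete filtered cocommutative bialgebra over `ℚ` with a
primitive series `β = ∑_{i≥1} b i` and the Foissy dendriform splitting
`u ≺ v = |u|/(|u|+|v|)·uv`, the element `1 + ∑_k β^{≺k}` is group-like;
componentwise: `Δ(b_i^{(k)}) = ∑_{p=0}^{k} ∑_{r=0}^{i} b_r^{(p)} ⊗ b_{i-r}^{(k-p)}`. -/
theorem foissy_power_grouplike
    {U : Type*} [Ring U] [Bialgebra ℚ U]
    (hcocomm : ∀ x : U,
      (TensorProduct.comm ℚ U U) (Coalgebra.comul (R := ℚ) x)
        = Coalgebra.comul (R := ℚ) x)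
    (b : ℕ → U) (hb0 : b 0 = 0)
    (hprim : ∀ i : ℕ, 1 ≤ i →
      Coalgebra.comul (R := ℚ) (b i) = b i ⊗ₜ[ℚ] 1 + 1 ⊗ₜ[ℚ] b i) :
    ∀ k i : ℕ,
      Coalgebra.comul (R := ℚ) (Bcomp b k i)
        = ∑ p ∈ Finset.range (k + 1), ∑ r ∈ Finset.range (i + 1),
            Bcomp b p r ⊗ₜ[ℚ] Bcomp b (k - p) (i - r) :=
  foissy_power_grouplike_general b hprim
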